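/- Fix ε ∈ (0, 1/4) and integers d, k with d = ⌊(k/(6ε))²⌋ + 1 and d ≥ 2. Consider the points v_j = e_d + e_j/√2 in ℝ^d for j = 1, …, d−1, the hinge-type loss g with g(r) = 1 − r for r ∈ [0,1] and g(r) = 0 for r > 1, and regularizer R(x) = ‖x‖₂². Let x = e_d − (∑_{i=1}^{(d−1)/2} e_i)/√((d−1)/2) (assuming d−1 even). Then (i) R(x) = 2; (ii) ⟨v_j, x⟩ = 1 for j > (d−1)/2 and ⟨v_j, x⟩ = 1 − 1/√(d−1) for j ≤ (d−1)/2; (iii) (1/(d−1))∑_{j=1}^{d−1} g(⟨v_j, x⟩) = 1/(2√(d−1)); and (iv) (1/(d−1))∑_j g(⟨v_j, x⟩) > ε·((1/(d−1))∑_j g(⟨v_j, x⟩) + R(x)/k). -/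

import Mathlib

/-! The first (d−1)/2 points meet the negative part of x, so their margin is 1 − 1/√(d−1) and each
pays hinge loss 1/√(d−1); the other half sit exactly at margin 1 and pay nothing. The mean loss
1/(2√(d−1)) beats ε times itself plus 2/k because the choice of d gives √(d−1) ≤ k/(6ε). -/

open Finset

theorem Fin.sum_ite_val_lt {n m : ℕ} (hmn : m ≤ n) (r : ℝ) :
    ∑ i : Fin n, (if (i : ℕ) < m then r else 0) = m * r := by
  rw [sum_ite, sum_const_zero, add_zero, Finset.sum_const, Fin.card_filter_val_lt,
    min_eq_right hmn, nsmul_eq_mul]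

theorem EuclideanSpace.inner_eq_of_apply_eq_ite_add_ite {d : ℕ} {a b : Fin d} {c : ℝ}
    {v : EuclideanSpace ℝ (Fin d)}
    (hv : ∀ i : Fin d, v i = (if (i : ℕ) = a then 1 else 0) + (if (i : ℕ) = b then c else 0))
    (x : EuclideanSpace ℝ (Fin d)) :
    inner ℝ v x = x a + c * x b := by
  simp only [PiLp.inner_apply, RCLike.inner_apply, conj_trivial, hv, Fin.val_inj, mul_add,
    mul_ite, mul_one, mul_zero, sum_add_distrib, sum_ite_eq', mem_univ, if_true]
  ring

theorem EuclideanSpace.norm_sq_of_apply_eq_ite {d a m : ℕ} (ha : a < d) (hma : m ≤ a) {c : ℝ}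
    {x : EuclideanSpace ℝ (Fin d)}
    (hx : ∀ i : Fin d, x i = if (i : ℕ) = a then 1 else if (i : ℕ) < m then -c else 0) :
    ‖x‖ ^ 2 = 1 + m * c ^ 2 := by
  have hsq : ∀ i : Fin d, x i ^ 2 =
      (if i = ⟨a, ha⟩ then 1 else 0) + (if (i : ℕ) < m then c ^ 2 else 0) := by
    intro i
    simp only [hx, Fin.ext_iff]
    split_ifs <;> first | omega | simp
  simp only [EuclideanSpace.real_norm_sq_eq, hsq, sum_add_distrib, sum_ite_eq',
    mem_univ, if_true, Fin.sum_ite_val_lt (hma.trans ha.le)]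

theorem sum_hinge_eq {n m : ℕ} (hmn : m ≤ n) {g : ℝ → ℝ}
    (hg : ∀ r ∈ Set.Icc (0 : ℝ) 1, g r = 1 - r) {t : ℝ} (ht : t ∈ Set.Icc (0 : ℝ) 1)
    {y : Fin n → ℝ} (hy : ∀ j, y j = if (j : ℕ) < m then 1 - t else 1) :
    ∑ j, g (y j) = m * t := by
  have hgy : ∀ j, g (y j) = if (j : ℕ) < m then t else 0 := by
    intro j
    rw [hy]
    split_ifs
    · rw [hg _ ⟨by linarith [ht.2], by linarith [ht.1]⟩, sub_sub_cancel]
    · rw [hg 1 ⟨zero_le_one, le_rfl⟩, sub_self]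
  simp only [hgy, Fin.sum_ite_val_lt hmn]

theorem Real.sqrt_natFloor_sq_le {t : ℝ} (ht : 0 ≤ t) : √(⌊t ^ 2⌋₊ : ℝ) ≤ t :=
  (Real.sqrt_le_sqrt (Nat.floor_le (sq_nonneg t))).trans (Real.sqrt_sq ht).le

theorem Real.inv_sqrt_two_mul_one_div_sqrt_div_two (t : ℝ) :
    (√2)⁻¹ * (1 / √(t / 2)) = 1 / √t := by
  rw [← one_div, div_mul_div_comm, one_mul, ← Real.sqrt_mul zero_le_two,
    mul_div_cancel₀ _ two_ne_zero]

theorem mul_one_div_add_two_div_lt {ε k s : ℝ} (hε : 0 < ε) (hε' : ε < 1 / 4) (hk : 0 < k)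
    (hs : 0 < s) (hsk : s ≤ k / (6 * ε)) : ε * (1 / (2 * s) + 2 / k) < 1 / (2 * s) := by
  have h : 6 * ε * s ≤ k := by rwa [le_div_iff₀' (by positivity)] at hsk
  have h' : ε * (k + 4 * s) < k := by nlinarith
  rw [div_add_div _ _ (by positivity) hk.ne', mul_div_assoc',
    div_lt_div_iff₀ (by positivity) (by positivity)]
  nlinarith

theorem stmt_18_general (ε k : ℝ) (hε : 0 < ε) (hε' : ε < 1 / 4) (hk : 0 < k)
    (d : ℕ) (hd2 : 2 ≤ d) (hdval : d = Nat.floor ((k / (6 * ε)) ^ 2) + 1)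
    (hdev : Even (d - 1))
    (g : ℝ → ℝ) (hg1 : ∀ r ∈ Set.Icc (0 : ℝ) 1, g r = 1 - r)
    (v : Fin (d - 1) → EuclideanSpace ℝ (Fin d))
    (hv : ∀ j : Fin (d - 1), ∀ i : Fin d,
      v j i = (if (i : ℕ) = d - 1 then (1 : ℝ) else 0) +
        (if (i : ℕ) = (j : ℕ) then (Real.sqrt 2)⁻¹ else 0))
    (x : EuclideanSpace ℝ (Fin d))
    (hx : ∀ i : Fin d, x i =
      if (i : ℕ) = d - 1 then (1 : ℝ)
      else if (i : ℕ) < (d - 1) / 2 then -(1 / Real.sqrt (((d : ℝ) - 1) / 2))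
      else 0) :
    ‖x‖ ^ 2 = 2 ∧
    (∀ j : Fin (d - 1),
      ((d - 1) / 2 ≤ (j : ℕ) → (inner ℝ (v j) x : ℝ) = 1) ∧
      ((j : ℕ) < (d - 1) / 2 → (inner ℝ (v j) x : ℝ) = 1 - 1 / Real.sqrt ((d : ℝ) - 1))) ∧
    (1 / ((d : ℝ) - 1)) * ∑ j : Fin (d - 1), g (inner ℝ (v j) x : ℝ)
        = 1 / (2 * Real.sqrt ((d : ℝ) - 1)) ∧
    (1 / ((d : ℝ) - 1)) * ∑ j : Fin (d - 1), g (inner ℝ (v j) x : ℝ) >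
      ε * ((1 / ((d : ℝ) - 1)) * ∑ j : Fin (d - 1), g (inner ℝ (v j) x : ℝ) + ‖x‖ ^ 2 / k) := by
  obtain ⟨m, hm⟩ := hdev
  have hhalf : (d - 1) / 2 = m := by omega
  have hdm : ((d : ℝ) - 1) = 2 * m := by
    rw [show d = 2 * m + 1 by omega]; push_cast; ring
  have hm1 : (1 : ℝ) ≤ m := by exact_mod_cast (show 1 ≤ m by omega)
  set s := √((d : ℝ) - 1) with hs
  have hs1 : 1 ≤ s := Real.one_le_sqrt.mpr (by linarith)
  have hnorm : ‖x‖ ^ 2 = 2 := by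
    rw [EuclideanSpace.norm_sq_of_apply_eq_ite (by omega) (by omega) hx, hhalf, div_pow,
      Real.sq_sqrt (by linarith), hdm]
    field_simp
    ring
  have hinner : ∀ j : Fin (d - 1), inner ℝ (v j) x = if (j : ℕ) < m then 1 - 1 / s else 1 := by
    intro j
    rw [EuclideanSpace.inner_eq_of_apply_eq_ite_add_ite (a := ⟨d - 1, by omega⟩)
      (b := ⟨j, by omega⟩) (hv j), hx, hx]
    simp only [hhalf, if_true, (show (j : ℕ) ≠ d - 1 by omega), if_false]
    split_ifs
    · rw [hs, ← Real.inv_sqrt_two_mul_one_div_sqrt_div_two ((d : ℝ) - 1)]; ring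
    · ring
  have hmean : (1 / ((d : ℝ) - 1)) * ∑ j : Fin (d - 1), g (inner ℝ (v j) x) = 1 / (2 * s) := by
    rw [sum_hinge_eq (by omega) hg1 ⟨by positivity, div_le_one_of_le₀ hs1 (by positivity)⟩ hinner,
      hdm]
    field_simp
  have hsk : s ≤ k / (6 * ε) := by
    rw [hs, hdval]; push_cast
    simpa using Real.sqrt_natFloor_sq_le (by positivity : 0 ≤ k / (6 * ε))
  refine ⟨hnorm, fun j => ⟨fun hj => ?_, fun hj => ?_⟩, hmean, ?_⟩
  · rw [hinner, if_neg (by omega)]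
  · rw [hinner, if_pos (by omega)]
  · rw [hmean, hnorm]
    exact mul_one_div_add_two_div_lt hε hε' hk (by positivity) hsk

theorem stmt_18 (ε k : ℝ) (hε : 0 < ε) (hε' : ε < 1 / 4) (hk : 0 < k)
    (d : ℕ) (hd2 : 2 ≤ d) (hdval : d = Nat.floor ((k / (6 * ε)) ^ 2) + 1)
    (hdev : Even (d - 1))
    (g : ℝ → ℝ) (hg1 : ∀ r ∈ Set.Icc (0 : ℝ) 1, g r = 1 - r)
    (hg2 : ∀ r : ℝ, 1 < r → g r = 0)
    (v : Fin (d - 1) → EuclideanSpace ℝ (Fin d))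
    (hv : ∀ j : Fin (d - 1), ∀ i : Fin d,
      v j i = (if (i : ℕ) = d - 1 then (1 : ℝ) else 0) +
        (if (i : ℕ) = (j : ℕ) then (Real.sqrt 2)⁻¹ else 0))
    (x : EuclideanSpace ℝ (Fin d))
    (hx : ∀ i : Fin d, x i =
      if (i : ℕ) = d - 1 then (1 : ℝ)
      else if (i : ℕ) < (d - 1) / 2 then -(1 / Real.sqrt (((d : ℝ) - 1) / 2))
      else 0) :
    ‖x‖ ^ 2 = 2 ∧
    (∀ j : Fin (d - 1),
      ((d - 1) / 2 ≤ (j : ℕ) → (inner ℝ (v j) x : ℝ) = 1) ∧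
      ((j : ℕ) < (d - 1) / 2 → (inner ℝ (v j) x : ℝ) = 1 - 1 / Real.sqrt ((d : ℝ) - 1))) ∧
    (1 / ((d : ℝ) - 1)) * ∑ j : Fin (d - 1), g (inner ℝ (v j) x : ℝ)
        = 1 / (2 * Real.sqrt ((d : ℝ) - 1)) ∧
    (1 / ((d : ℝ) - 1)) * ∑ j : Fin (d - 1), g (inner ℝ (v j) x : ℝ) >
      ε * ((1 / ((d : ℝ) - 1)) * ∑ j : Fin (d - 1), g (inner ℝ (v j) x : ℝ) + ‖x‖ ^ 2 / k) :=
  stmt_18_general ε k hε hε' hk d hd2 hdval hdev g hg1 v hv x hx
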